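/- arXiv:2104.08833 — 2 statements merged into one kernel-verified Lean document; each statement's English description precedes it below -/
import Mathlib

section
/- For n ≥ 2α, the degenerate Fubini-type polynomials are related to the degenerate Apostol-Bernoulli polynomials of order 2α with parameter γ = 1/2 by a_{n−2α}^{(α)}(x;λ) = B_n^{(2α)}(x; λ; 1/2) / (2^α · ⟨n⟩_{2α}), where ⟨n⟩_{2α} = n(n−1)⋯(n−2α+1); moreover B_n^{(2α)}(x;λ;1/2) = 0 for 0 ≤ n < 2α. -/
/-!
Since `2 - E = -2 (E/2 - 1)` for `E = (1+λt)^{1/λ}`, the two generating functions have the same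
numerator `(1+λt)^{x/λ}` and denominators differing by the constant `2^{2α}`, so
`∑ Bₙ tⁿ/n! = 2^α t^{2α} ∑ aₙ tⁿ/n!`. Comparing coefficients of `tⁿ` gives both claims; the factor
`⟨n⟩_{2α} = n!/(n-2α)!` comes from shifting an exponential generating function by `t^{2α}`.
-/

open Finset PowerSeries

/-- The power series of `(1+λt)^{x/λ}`. -/
noncomputable def degExp (lam x : ℝ) : PowerSeries ℝ :=
  PowerSeries.mk fun n => (∏ j ∈ Finset.range n, (x - j * lam)) / n.factorial

/-- The falling factorial `⟨x⟩_m = x(x-1)⋯(x-m+1)`. -/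
noncomputable def fall (x : ℝ) (m : ℕ) : ℝ := ∏ j ∈ Finset.range m, (x - j)

lemma constantCoeff_degExp (lam x : ℝ) : constantCoeff (degExp lam x) = 1 := by
  simp [degExp]

lemma degExp_ne_two (lam x : ℝ) : degExp lam x ≠ 2 := fun h => by
  have := congrArg constantCoeff h
  rw [constantCoeff_degExp, map_ofNat] at this
  norm_num at this

lemma fall_eq_descPochhammer_eval (x : ℝ) (m : ℕ) : fall x m = (descPochhammer ℝ m).eval x :=
  (descPochhammer_eval_eq_prod_range m x).symm

lemma fall_natCast (n m : ℕ) : fall n m = n.descFactorial m := by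
  rw [fall_eq_descPochhammer_eval, descPochhammer_eval_eq_descFactorial]

section

variable {K : Type*} [Field K]

noncomputable def egf (a : ℕ → K) : K⟦X⟧ := mk fun n => a n / n.factorial

lemma two_sub_pow_two_mul (h2 : (2 : K) ≠ 0) (E : K⟦X⟧) (α : ℕ) :
    (2 - E) ^ (2 * α) = C (2 ^ (2 * α)) * (C (1 / 2) * E - 1) ^ (2 * α) := by
  have : 2 - E = -(C 2 * (C (1 / 2) * E - 1)) := by
    rw [mul_sub, ← mul_assoc, ← map_mul, mul_one_div_cancel h2, map_one, one_mul, map_ofNat]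
    ring
  rw [this, (even_two_mul α).neg_pow, mul_pow, map_pow]

lemma eq_C_two_pow_mul_X_pow_mul (h2 : (2 : K) ≠ 0) {E F A B : K⟦X⟧} (hE : E ≠ 2) (α : ℕ)
    (hA : (2 - E) ^ (2 * α) * A = 2 ^ α * F)
    (hB : (C (1 / 2) * E - 1) ^ (2 * α) * B = X ^ (2 * α) * F) :
    B = C (2 ^ α) * X ^ (2 * α) * A := by
  have hU : (2 - E) ^ (2 * α) ≠ 0 := pow_ne_zero _ (sub_ne_zero.2 hE.symm)
  have hC : (C (2 ^ (2 * α)) : K⟦X⟧) = C (2 ^ α) * 2 ^ α := by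
    rw [← map_ofNat C 2, ← map_pow, ← map_mul, ← pow_add, two_mul]
  refine mul_left_cancel₀ hU ?_
  calc (2 - E) ^ (2 * α) * B = C (2 ^ (2 * α)) * (X ^ (2 * α) * F) := by
        rw [two_sub_pow_two_mul h2, mul_assoc, hB]
    _ = C (2 ^ α) * X ^ (2 * α) * (2 ^ α * F) := by rw [hC]; ring
    _ = (2 - E) ^ (2 * α) * (C (2 ^ α) * X ^ (2 * α) * A) := by rw [← hA]; ring

variable [CharZero K]

lemma egf_eq_C_mul_X_pow_mul_egf {a b : ℕ → K} {c : K} {k : ℕ}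
    (h : egf b = C c * X ^ k * egf a) :
    (∀ n < k, b n = 0) ∧ ∀ n, k ≤ n → b n = c * n.descFactorial k * a (n - k) := by
  have hcoeff (n : ℕ) :
      b n / n.factorial = c * if k ≤ n then a (n - k) / (n - k).factorial else 0 := by
    simpa [egf, mul_assoc, coeff_X_pow_mul'] using congrArg (coeff n) h
  refine ⟨fun n hn => by simpa [hn.not_ge, Nat.factorial_ne_zero] using hcoeff n, fun n hn => ?_⟩
  have hfact : ((n - k).factorial : K) * n.descFactorial k = n.factorial := by
    exact_mod_cast Nat.factorial_mul_descFactorial hn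
  have hfact_ne : ((n - k).factorial : K) ≠ 0 := Nat.cast_ne_zero.2 (Nat.factorial_ne_zero _)
  have hbn := hcoeff n
  rw [if_pos hn, div_eq_iff (Nat.cast_ne_zero.2 n.factorial_ne_zero), ← hfact] at hbn
  rw [hbn]
  field_simp

end

theorem degenerateFubiniType_eq_degenerateApostolBernoulli_general (α : ℕ)
    (lam x : ℝ) (a B : ℕ → ℝ)
    (ha : ((2 : PowerSeries ℝ) - degExp lam 1) ^ (2 * α) *
          PowerSeries.mk (fun n => a n / n.factorial) =
        (2 : PowerSeries ℝ) ^ α * degExp lam x)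
    (hB : (PowerSeries.C (R := ℝ) (1 / 2) * degExp lam 1 - 1) ^ (2 * α) *
          PowerSeries.mk (fun n => B n / n.factorial) =
        (PowerSeries.X : PowerSeries ℝ) ^ (2 * α) * degExp lam x) :
    (∀ n < 2 * α, B n = 0) ∧
      ∀ n, 2 * α ≤ n → a (n - 2 * α) = B n / (2 ^ α * fall (n : ℝ) (2 * α)) := by
  have hgen : egf B = C (2 ^ α) * X ^ (2 * α) * egf a :=
    eq_C_two_pow_mul_X_pow_mul two_ne_zero (degExp_ne_two lam 1) α ha hB
  obtain ⟨hlow, hhigh⟩ := egf_eq_C_mul_X_pow_mul_egf hgen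
  refine ⟨hlow, fun n hn => ?_⟩
  have hdesc : (n.descFactorial (2 * α) : ℝ) ≠ 0 :=
    Nat.cast_ne_zero.2 (Nat.descFactorial_eq_zero_iff_lt.not.2 hn.not_gt)
  rw [hhigh n hn, fall_natCast]
  field_simp

theorem degenerateFubiniType_eq_degenerateApostolBernoulli (α : ℕ) (hα : 1 ≤ α)
    (lam x : ℝ) (hlam : lam ≠ 0) (a B : ℕ → ℝ)
    (ha : ((2 : PowerSeries ℝ) - degExp lam 1) ^ (2 * α) *
          PowerSeries.mk (fun n => a n / n.factorial) =
        (2 : PowerSeries ℝ) ^ α * degExp lam x)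
    (hB : (PowerSeries.C (R := ℝ) (1 / 2) * degExp lam 1 - 1) ^ (2 * α) *
          PowerSeries.mk (fun n => B n / n.factorial) =
        (PowerSeries.X : PowerSeries ℝ) ^ (2 * α) * degExp lam x) :
    (∀ n < 2 * α, B n = 0) ∧
      ∀ n, 2 * α ≤ n → a (n - 2 * α) = B n / (2 ^ α * fall (n : ℝ) (2 * α)) :=
  degenerateFubiniType_eq_degenerateApostolBernoulli_general α lam x a B ha hB
end

section
/- The degenerate Fubini-type polynomials satisfy the recurrence a_{n+1}^{(α)}(y + λ; λ) = (y + λ)·a_n^{(α)}(y; λ) + √2·α·a_n^{(α+1/2)}(y + 1; λ) for all n ≥ 0. -/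
/-!
The generating function `F(β, x; t) = 2^β (2 - (1 + λt)^{1/λ})^{-2β} (1 + λt)^{x/λ}` satisfies,
near `t = 0`, the differential equation
`∂ₜ F(α, y + λ; t) = (y + λ) F(α, y; t) + √2 α F(α + 1/2, y + 1; t)`,
since `∂ₜ (2 - (1 + λt)^{1/λ}) = -(1 + λt)^{1/λ - 1}` and `√2 · 2^{α+1/2} = 2 · 2^α`.
The coefficients of an exponential generating series are the iterated derivatives at `0`,
so comparing the `n`-th coefficients of both sides gives the recurrence.
-/

open Filter Topology

theorem eq_iteratedDeriv_zero_of_eventually_hasSum {𝕜 : Type*} [NontriviallyNormedField 𝕜]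
    [CompleteSpace 𝕜] [CharZero 𝕜] {c : ℕ → 𝕜} {f : 𝕜 → 𝕜}
    (h : ∀ᶠ t in 𝓝 0, HasSum (fun n => c n * t ^ n / n.factorial) (f t)) (n : ℕ) :
    c n = iteratedDeriv n f 0 := by
  have hp : HasFPowerSeriesAt f (.ofScalars 𝕜 fun n => c n / n.factorial) 0 := by
    refine hasFPowerSeriesAt_iff.mpr (h.mono fun t ht => ?_)
    simpa only [FormalMultilinearSeries.coeff_ofScalars, smul_eq_mul, zero_add,
      mul_div_assoc', mul_comm] using ht
  obtain ⟨r, hr⟩ := hp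
  rw [iteratedDeriv_eq_iteratedFDeriv, ← hr.factorial_smul,
    FormalMultilinearSeries.apply_eq_pow_smul_coeff, FormalMultilinearSeries.coeff_ofScalars,
    one_pow, one_smul, nsmul_eq_mul, mul_div_cancel₀ _ (Nat.cast_ne_zero.mpr n.factorial_ne_zero)]

noncomputable def degenerateFubiniGenFun (lam β x t : ℝ) : ℝ :=
  (2 : ℝ) ^ β / (2 - (1 + lam * t) ^ (1 / lam)) ^ (2 * β) * (1 + lam * t) ^ (x / lam)

section

variable {lam : ℝ}

theorem hasDerivAt_one_add_mul_rpow_div (hlam : lam ≠ 0) (x : ℝ) {t : ℝ}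
    (ht : 0 < 1 + lam * t) :
    HasDerivAt (fun s => (1 + lam * s) ^ (x / lam)) (x * (1 + lam * t) ^ ((x - lam) / lam)) t := by
  convert ((hasDerivAt_id' t).const_mul lam).const_add 1 |>.rpow_const (p := x / lam)
    (Or.inl ht.ne') using 1
  rw [sub_div, div_self hlam]
  field_simp

theorem hasDerivAt_degenerateFubiniGenFun (hlam : lam ≠ 0) (β x : ℝ) {t : ℝ}
    (hP : 0 < 1 + lam * t) (hQ : 0 < 2 - (1 + lam * t) ^ (1 / lam)) :
    HasDerivAt (degenerateFubiniGenFun lam β (x + lam))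
      ((x + lam) * degenerateFubiniGenFun lam β x t +
        Real.sqrt 2 * β * degenerateFubiniGenFun lam (β + 1 / 2) (x + 1) t) t := by
  have hQ' : HasDerivAt (fun s => 2 - (1 + lam * s) ^ (1 / lam))
      (-(1 + lam * t) ^ ((1 - lam) / lam)) t := by
    simpa using (hasDerivAt_one_add_mul_rpow_div hlam 1 hP).const_sub 2
  have h : HasDerivAt (degenerateFubiniGenFun lam β (x + lam)) _ t :=
    ((hasDerivAt_const t ((2 : ℝ) ^ β)).div (hQ'.rpow_const (p := 2 * β) (Or.inl hQ.ne'))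
      (Real.rpow_pos_of_pos hQ _).ne').mul (hasDerivAt_one_add_mul_rpow_div hlam (x + lam) hP)
  convert h using 1
  simp only [degenerateFubiniGenFun, Pi.div_apply, add_sub_cancel_right]
  set P := 1 + lam * t
  set Q := 2 - P ^ (1 / lam)
  have hP_add : P ^ ((x + 1) / lam) = P ^ ((1 - lam) / lam) * P ^ ((x + lam) / lam) := by
    rw [← Real.rpow_add hP]; congr 1; ring
  have hQ_add : Q ^ (2 * (β + 1 / 2)) = Q ^ (2 * β) * Q := by
    rw [← Real.rpow_add_one hQ.ne']; ring_nf
  have hQ_sub : Q ^ (2 * β - 1) = Q ^ (2 * β) / Q := Real.rpow_sub_one hQ.ne' _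
  have htwo : (2 : ℝ) ^ (β + 1 / 2) = 2 ^ β * Real.sqrt 2 := by
    rw [Real.rpow_add two_pos, Real.sqrt_eq_rpow]
  have hQβ : 0 < Q ^ (2 * β) := Real.rpow_pos_of_pos hQ _
  rw [hP_add, hQ_add, hQ_sub, htwo]
  field_simp
  rw [Real.sq_sqrt zero_le_two]
  ring

theorem eventually_pos_one_add_mul_and_two_sub_rpow (lam : ℝ) :
    ∀ᶠ t in 𝓝 0, 0 < 1 + lam * t ∧ 0 < 2 - (1 + lam * t) ^ (1 / lam) := by
  have hP : ContinuousAt (fun t : ℝ => 1 + lam * t) 0 := by fun_prop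
  have hQ : ContinuousAt (fun t : ℝ => 2 - (1 + lam * t) ^ (1 / lam)) 0 :=
    continuousAt_const.sub (hP.rpow_const (Or.inl (by simp)))
  exact (continuousAt_const.eventually_lt hP (by simp)).and
    (continuousAt_const.eventually_lt hQ (by simp))

theorem deriv_degenerateFubiniGenFun_eventuallyEq (hlam : lam ≠ 0) (β x : ℝ) :
    deriv (degenerateFubiniGenFun lam β (x + lam)) =ᶠ[𝓝 0] fun t =>
      (x + lam) * degenerateFubiniGenFun lam β x t +
        Real.sqrt 2 * β * degenerateFubiniGenFun lam (β + 1 / 2) (x + 1) t :=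
  (eventually_pos_one_add_mul_and_two_sub_rpow lam).mono fun _ ht =>
    (hasDerivAt_degenerateFubiniGenFun hlam β x ht.1 ht.2).deriv

end

theorem degenerateFubiniType_derivRecurrence_general (α lam : ℝ) (hlam : lam ≠ 0)
    (a : ℝ → ℝ → ℕ → ℝ)
    (ha : ∀ β : ℝ, (β = α ∨ β = α + 1 / 2) → ∀ x : ℝ,
      ∀ᶠ t in nhds (0 : ℝ),
        HasSum (fun n : ℕ => a β x n * t ^ n / n.factorial)
          ((2 : ℝ) ^ β / (2 - (1 + lam * t) ^ (1 / lam)) ^ (2 * β) *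
            (1 + lam * t) ^ (x / lam)))
    (n : ℕ) (y : ℝ) :
    a α (y + lam) (n + 1) =
      (y + lam) * a α y n + Real.sqrt 2 * α * a (α + 1 / 2) (y + 1) n := by
  have hsum : ∀ᶠ t in 𝓝 0, HasSum
      (fun m => ((y + lam) * a α y m + Real.sqrt 2 * α * a (α + 1 / 2) (y + 1) m) *
        t ^ m / m.factorial)
      ((y + lam) * degenerateFubiniGenFun lam α y t +
        Real.sqrt 2 * α * degenerateFubiniGenFun lam (α + 1 / 2) (y + 1) t) := by
    filter_upwards [ha α (.inl rfl) y, ha (α + 1 / 2) (.inr rfl) (y + 1)] with t h₁ h₂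
    exact ((h₁.mul_left (y + lam)).add (h₂.mul_left (Real.sqrt 2 * α))).congr_fun
      fun m => by ring
  calc a α (y + lam) (n + 1)
      = iteratedDeriv (n + 1) (degenerateFubiniGenFun lam α (y + lam)) 0 :=
        eq_iteratedDeriv_zero_of_eventually_hasSum (ha α (.inl rfl) (y + lam)) _
    _ = iteratedDeriv n (deriv (degenerateFubiniGenFun lam α (y + lam))) 0 := by
        rw [iteratedDeriv_succ']
    _ = _ := (deriv_degenerateFubiniGenFun_eventuallyEq hlam α y).iteratedDeriv_eq n
    _ = _ := (eq_iteratedDeriv_zero_of_eventually_hasSum hsum n).symm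

theorem degenerateFubiniType_derivRecurrence (α lam : ℝ) (hα : 0 < α) (hlam : lam ≠ 0)
    (a : ℝ → ℝ → ℕ → ℝ)
    (ha : ∀ β : ℝ, (β = α ∨ β = α + 1 / 2) → ∀ x : ℝ,
      ∀ᶠ t in nhds (0 : ℝ),
        HasSum (fun n : ℕ => a β x n * t ^ n / n.factorial)
          ((2 : ℝ) ^ β / (2 - (1 + lam * t) ^ (1 / lam)) ^ (2 * β) *
            (1 + lam * t) ^ (x / lam)))
    (n : ℕ) (y : ℝ) :
    a α (y + lam) (n + 1) =
      (y + lam) * a α y n + Real.sqrt 2 * α * a (α + 1 / 2) (y + 1) n :=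
  degenerateFubiniType_derivRecurrence_general α lam hlam a ha n y
end
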